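/- arXiv:1101.4442 — 2 statements merged into one kernel-verified Lean document; each statement's English description precedes it below -/
import Mathlib

section
/- There are infinitely many pairwise non-similar well-rounded full-rank lattices in ℝ² each having exactly 4 minimal vectors. -/
/-!
Two unit vectors `u, v ∈ ℝ²` with `|⟪u, v⟫| < 1/2` span a lattice of minimum `1` whose minimal
vectors are exactly `±u, ±v`: the form `a² + 2abc + b²` with `|c| < 1/2` exceeds `1` at integer
points with `ab ≠ 0`. A similarity `x ↦ α • f x` multiplies the minimum by `α²` and maps minimal
vectors onto minimal vectors, so between two such lattices `α² = 1` and `|⟪u, v⟫|` is preserved.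
The angles with `⟪u, v⟫ = 1/(n+3)` therefore give pairwise non-similar lattices.
-/

/-- The minimum `|Λ|` of a planar lattice `Λ = S ⊆ ℝ²`: the infimum of squared
Euclidean norms of nonzero points. -/
noncomputable def pMin (S : Set (EuclideanSpace ℝ (Fin 2))) : ℝ :=
  sInf {r : ℝ | ∃ x ∈ S, x ≠ 0 ∧ ‖x‖ ^ 2 = r}

/-- The set of minimal vectors `S(Λ)` of a planar lattice. -/
def pMinVecs (S : Set (EuclideanSpace ℝ (Fin 2))) : Set (EuclideanSpace ℝ (Fin 2)) :=
  {x ∈ S | ‖x‖ ^ 2 = pMin S}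

/-- A planar lattice is well-rounded if its minimal vectors span `ℝ²`. -/
def pIsWellRounded (S : Set (EuclideanSpace ℝ (Fin 2))) : Prop :=
  Submodule.span ℝ (pMinVecs S) = ⊤

/-- Two subsets of `ℝ²` are similar if one is obtained from the other by applying
an orthogonal transformation and multiplying by a nonzero scalar. -/
def pSimilar (S T : Set (EuclideanSpace ℝ (Fin 2))) : Prop :=
  ∃ (α : ℝ) (f : EuclideanSpace ℝ (Fin 2) ≃ₗᵢ[ℝ] EuclideanSpace ℝ (Fin 2)),
    α ≠ 0 ∧ T = (fun x => α • f x) '' S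

open scoped RealInnerProductSpace

local notation "ℝ²" => EuclideanSpace ℝ (Fin 2)

lemma one_lt_sq_add_two_mul_mul_add_sq {a b : ℤ} {c : ℝ} (hc : |c| < 1 / 2)
    (ha : a ≠ 0) (hb : b ≠ 0) : 1 < (a : ℝ) ^ 2 + 2 * a * b * c + b ^ 2 := by
  have hA : (1 : ℝ) ≤ |(a : ℝ)| := by exact_mod_cast Int.one_le_abs ha
  have hB : (1 : ℝ) ≤ |(b : ℝ)| := by exact_mod_cast Int.one_le_abs hb
  have habc : -(|(a : ℝ)| * |(b : ℝ)| * |c|) ≤ a * b * c := by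
    rw [← abs_mul, ← abs_mul]; exact neg_abs_le _
  have hAB : 1 ≤ |(a : ℝ)| * |(b : ℝ)| := one_le_mul_of_one_le_of_one_le hA hB
  nlinarith [sq_abs (a : ℝ), sq_abs (b : ℝ), sq_nonneg (|(a : ℝ)| - |(b : ℝ)|),
    mul_pos (by linarith : (0 : ℝ) < |(a : ℝ)| * |(b : ℝ)|) (by linarith : 0 < 1 / 2 - |c|)]

lemma eq_zero_of_sq_add_two_mul_mul_add_sq_eq_zero {s t c : ℝ} (hc : |c| < 1)
    (h : s ^ 2 + 2 * s * t * c + t ^ 2 = 0) : s = 0 ∧ t = 0 := by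
  have hstc : -(|s| * |t| * |c|) ≤ s * t * c := by
    rw [← abs_mul, ← abs_mul]; exact neg_abs_le _
  have hs : s ^ 2 = 0 ∧ t ^ 2 = 0 := by
    constructor <;> nlinarith [sq_abs s, sq_abs t, sq_nonneg (|s| - |t|), abs_nonneg c,
      mul_nonneg (mul_nonneg (abs_nonneg s) (abs_nonneg t)) (by linarith : 0 ≤ 1 - |c|)]
  exact ⟨pow_eq_zero_iff two_ne_zero |>.mp hs.1, pow_eq_zero_iff two_ne_zero |>.mp hs.2⟩

lemma one_le_intCast_sq {a : ℤ} (ha : a ≠ 0) : (1 : ℝ) ≤ (a : ℝ) ^ 2 :=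
  mod_cast (one_le_sq_iff_one_le_abs _).mpr (Int.one_le_abs ha)

section InnerProductSpace

variable {F : Type*} [NormedAddCommGroup F] [InnerProductSpace ℝ F]

lemma norm_smul_add_smul_sq (u v : F) (a b : ℝ) :
    ‖a • u + b • v‖ ^ 2 = a ^ 2 * ‖u‖ ^ 2 + 2 * a * b * ⟪u, v⟫ + b ^ 2 * ‖v‖ ^ 2 := by
  rw [norm_add_sq_real, norm_smul, norm_smul, real_inner_smul_left, real_inner_smul_right,
    mul_pow, mul_pow, Real.norm_eq_abs, Real.norm_eq_abs, sq_abs, sq_abs]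
  ring

lemma linearIndependent_of_abs_inner_lt {u v : F} (hu : ‖u‖ = 1) (hv : ‖v‖ = 1)
    (huv : |⟪u, v⟫| < 1) :
    LinearIndependent ℝ ![u, v] := by
  refine LinearIndependent.pair_iff.mpr fun s t hst => ?_
  refine eq_zero_of_sq_add_two_mul_mul_add_sq_eq_zero huv ?_
  simpa [hst, hu, hv] using (norm_smul_add_smul_sq u v s t).symm

lemma abs_inner_of_mem_of_mem {u v x y : F} (hu : ‖u‖ = 1) (hv : ‖v‖ = 1)
    (hx : x ∈ ({u, -u, v, -v} : Set F)) (hy : y ∈ ({u, -u, v, -v} : Set F)) :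
    |⟪x, y⟫| = 1 ∨ |⟪x, y⟫| = |⟪u, v⟫| := by
  simp only [Set.mem_insert_iff, Set.mem_singleton_iff] at hx hy
  rcases hx with rfl | rfl | rfl | rfl <;> rcases hy with rfl | rfl | rfl | rfl <;>
    simp [inner_neg_left, inner_neg_right, real_inner_comm, hu, hv]

end InnerProductSpace

def pairLattice (u v : ℝ²) : Submodule ℤ ℝ² := Submodule.span ℤ {u, v}

section pairLattice

variable {u v : ℝ²}

lemma mem_pairLattice_iff {x : ℝ²} :
    x ∈ pairLattice u v ↔ ∃ a b : ℤ, (a : ℝ) • u + (b : ℝ) • v = x := by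
  simp only [pairLattice, Submodule.mem_span_pair, Int.cast_smul_eq_zsmul]

lemma norm_intCast_smul_add_smul_sq (hu : ‖u‖ = 1) (hv : ‖v‖ = 1) (a b : ℤ) :
    ‖(a : ℝ) • u + (b : ℝ) • v‖ ^ 2 = (a : ℝ) ^ 2 + 2 * a * b * ⟪u, v⟫ + b ^ 2 := by
  rw [norm_smul_add_smul_sq, hu, hv]
  ring

lemma one_le_norm_sq_of_mem_pairLattice (hu : ‖u‖ = 1) (hv : ‖v‖ = 1) (huv : |⟪u, v⟫| < 1 / 2)
    {x : ℝ²} (hx : x ∈ pairLattice u v) (hx0 : x ≠ 0) : 1 ≤ ‖x‖ ^ 2 := by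
  obtain ⟨a, b, rfl⟩ := mem_pairLattice_iff.mp hx
  rw [norm_intCast_smul_add_smul_sq hu hv]
  by_cases ha : a = 0
  · have hb : b ≠ 0 := by rintro rfl; simp [ha] at hx0
    simpa [ha] using one_le_intCast_sq hb
  by_cases hb : b = 0
  · simpa [hb] using one_le_intCast_sq ha
  exact (one_lt_sq_add_two_mul_mul_add_sq huv ha hb).le

lemma mem_of_mem_pairLattice_of_norm_sq_eq_one (hu : ‖u‖ = 1) (hv : ‖v‖ = 1)
    (huv : |⟪u, v⟫| < 1 / 2) {x : ℝ²} (hx : x ∈ pairLattice u v) (hx1 : ‖x‖ ^ 2 = 1) :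
    x ∈ ({u, -u, v, -v} : Set ℝ²) := by
  obtain ⟨a, b, rfl⟩ := mem_pairLattice_iff.mp hx
  rw [norm_intCast_smul_add_smul_sq hu hv] at hx1
  by_cases ha : a = 0
  · obtain hb | hb := sq_eq_one_iff.mp (by simpa [ha] using hx1 : (b : ℝ) ^ 2 = 1) <;>
      simp [ha, hb]
  by_cases hb : b = 0
  · obtain ha | ha := sq_eq_one_iff.mp (by simpa [hb] using hx1 : (a : ℝ) ^ 2 = 1) <;>
      simp [ha, hb]
  exact absurd hx1 (one_lt_sq_add_two_mul_mul_add_sq huv ha hb).ne'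

lemma pMin_pairLattice (hu : ‖u‖ = 1) (hv : ‖v‖ = 1) (huv : |⟪u, v⟫| < 1 / 2) :
    pMin (pairLattice u v) = 1 := by
  have hu_mem : u ∈ pairLattice u v := Submodule.subset_span (by simp)
  refine IsLeast.csInf_eq
    ⟨⟨u, hu_mem, norm_ne_zero_iff.mp (hu ▸ one_ne_zero), by rw [hu, one_pow]⟩, ?_⟩
  rintro r ⟨x, hx, hx0, rfl⟩
  exact one_le_norm_sq_of_mem_pairLattice hu hv huv hx hx0

lemma pMinVecs_pairLattice (hu : ‖u‖ = 1) (hv : ‖v‖ = 1) (huv : |⟪u, v⟫| < 1 / 2) :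
    pMinVecs (pairLattice u v) = {u, -u, v, -v} := by
  ext x
  rw [pMinVecs, Set.mem_ofPred_eq, pMin_pairLattice hu hv huv]
  refine ⟨fun ⟨hx, hx1⟩ => mem_of_mem_pairLattice_of_norm_sq_eq_one hu hv huv hx hx1, ?_⟩
  have hu_mem : u ∈ pairLattice u v := Submodule.subset_span (by simp)
  have hv_mem : v ∈ pairLattice u v := Submodule.subset_span (by simp)
  rintro (rfl | rfl | rfl | rfl) <;>
    simp [hu, hv, hu_mem, hv_mem]

lemma ncard_pMinVecs_pairLattice (hu : ‖u‖ = 1) (hv : ‖v‖ = 1) (huv : |⟪u, v⟫| < 1 / 2) :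
    (pMinVecs (pairLattice u v)).ncard = 4 := by
  have huv₁ : u ≠ v := by
    rintro rfl; rw [real_inner_self_eq_norm_sq, hu] at huv; norm_num at huv
  have huv₂ : u ≠ -v := by
    rintro rfl; rw [inner_neg_left, real_inner_self_eq_norm_sq, hv] at huv; norm_num at huv
  have hu₂ : u ≠ -u := by
    rw [Ne, eq_neg_iff_add_eq_zero, ← two_smul ℝ]; simp [norm_ne_zero_iff.mp (hu ▸ one_ne_zero)]
  have hv₂ : v ≠ -v := by
    rw [Ne, eq_neg_iff_add_eq_zero, ← two_smul ℝ]; simp [norm_ne_zero_iff.mp (hv ▸ one_ne_zero)]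
  rw [pMinVecs_pairLattice hu hv huv, Set.ncard_insert_of_notMem, Set.ncard_insert_of_notMem,
    Set.ncard_pair] <;> simp [hu₂, hv₂, huv₁, huv₂, neg_eq_iff_eq_neg]

lemma span_pairLattice (hu : ‖u‖ = 1) (hv : ‖v‖ = 1) (huv : |⟪u, v⟫| < 1) :
    Submodule.span ℝ (pairLattice u v : Set ℝ²) = ⊤ := by
  have := (linearIndependent_of_abs_inner_lt hu hv huv).span_eq_top_of_card_eq_finrank
    (by rw [Fintype.card_fin, finrank_euclideanSpace_fin])
  rwa [Matrix.range_cons_cons_empty, ← Submodule.span_span_of_tower ℤ] at this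

lemma pIsWellRounded_pairLattice (hu : ‖u‖ = 1) (hv : ‖v‖ = 1) (huv : |⟪u, v⟫| < 1 / 2) :
    pIsWellRounded (pairLattice u v) := by
  rw [pIsWellRounded, pMinVecs_pairLattice hu hv huv, eq_top_iff,
    ← span_pairLattice hu hv (by linarith), pairLattice, Submodule.span_span_of_tower]
  exact Submodule.span_mono (Set.insert_subset_insert (by simp))

lemma discreteTopology_pairLattice (hu : ‖u‖ = 1) (hv : ‖v‖ = 1) (huv : |⟪u, v⟫| < 1 / 2) :
    DiscreteTopology (pairLattice u v) := by
  refine DiscreteTopology.of_forall_le_norm one_pos fun x hx0 => ?_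
  have := one_le_norm_sq_of_mem_pairLattice hu hv huv x.2 (by simpa using hx0)
  rwa [one_le_sq_iff_one_le_abs, abs_norm] at this

end pairLattice

section similarity

open Pointwise

variable (α : ℝ) (f : ℝ² ≃ₗᵢ[ℝ] ℝ²)

lemma norm_sq_smul_linearIsometryEquiv (x : ℝ²) : ‖α • f x‖ ^ 2 = α ^ 2 * ‖x‖ ^ 2 := by
  rw [norm_smul, f.norm_map, mul_pow, Real.norm_eq_abs, sq_abs]

lemma inner_smul_linearIsometryEquiv (x y : ℝ²) : ⟪α • f x, α • f y⟫ = α ^ 2 * ⟪x, y⟫ := by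
  rw [real_inner_smul_left, real_inner_smul_right, f.inner_map_map]
  ring

variable {α}

lemma pMin_image_smul_linearIsometryEquiv (hα : α ≠ 0) (S : Set ℝ²) :
    pMin ((fun x => α • f x) '' S) = α ^ 2 * pMin S := by
  have : {r : ℝ | ∃ x ∈ (fun x => α • f x) '' S, x ≠ 0 ∧ ‖x‖ ^ 2 = r} =
      α ^ 2 • {r : ℝ | ∃ x ∈ S, x ≠ 0 ∧ ‖x‖ ^ 2 = r} := by
    ext r
    simp [Set.mem_smul_set, hα, norm_sq_smul_linearIsometryEquiv, and_assoc]
  rw [pMin, pMin, this, Real.sInf_smul_of_nonneg (sq_nonneg α), smul_eq_mul]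

lemma pMinVecs_image_smul_linearIsometryEquiv (hα : α ≠ 0) (S : Set ℝ²) :
    pMinVecs ((fun x => α • f x) '' S) = (fun x => α • f x) '' pMinVecs S := by
  ext x
  simp only [pMinVecs, Set.mem_image, Set.mem_ofPred_eq, pMin_image_smul_linearIsometryEquiv f hα]
  constructor
  · rintro ⟨⟨y, hy, rfl⟩, hn⟩
    rw [norm_sq_smul_linearIsometryEquiv] at hn
    exact ⟨y, ⟨hy, mul_left_cancel₀ (pow_ne_zero 2 hα) hn⟩, rfl⟩
  · rintro ⟨y, ⟨hy, hn⟩, rfl⟩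
    exact ⟨⟨y, hy, rfl⟩, by rw [norm_sq_smul_linearIsometryEquiv, hn]⟩

end similarity

lemma abs_inner_eq_of_pSimilar_pairLattice {u v u' v' : ℝ²} (hu : ‖u‖ = 1) (hv : ‖v‖ = 1)
    (huv : |⟪u, v⟫| < 1 / 2) (hu' : ‖u'‖ = 1) (hv' : ‖v'‖ = 1) (huv' : |⟪u', v'⟫| < 1 / 2)
    (h : pSimilar (pairLattice u v) (pairLattice u' v')) : |⟪u', v'⟫| = |⟪u, v⟫| := by
  obtain ⟨α, f, hα, hL⟩ := h
  have hα2 : α ^ 2 = 1 := by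
    have h1 := pMin_pairLattice hu' hv' huv'
    rwa [hL, pMin_image_smul_linearIsometryEquiv f hα, pMin_pairLattice hu hv huv, mul_one] at h1
  have hmin := pMinVecs_image_smul_linearIsometryEquiv f hα (pairLattice u v)
  rw [← hL, pMinVecs_pairLattice hu hv huv, pMinVecs_pairLattice hu' hv' huv'] at hmin
  obtain ⟨x, hx, hxu'⟩ : u' ∈ (fun x => α • f x) '' {u, -u, v, -v} := hmin ▸ by simp
  obtain ⟨y, hy, hyv'⟩ : v' ∈ (fun x => α • f x) '' {u, -u, v, -v} := hmin ▸ by simp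
  have hinner : ⟪u', v'⟫ = ⟪x, y⟫ := by
    rw [← hxu', ← hyv', inner_smul_linearIsometryEquiv, hα2, one_mul]
  rcases abs_inner_of_mem_of_mem hu hv hx hy with h1 | h
  · rw [hinner, h1] at huv'; norm_num at huv'
  · rw [hinner, h]

noncomputable def unitVecOfCos (c : ℝ) : ℝ² := !₂[c, √(1 - c ^ 2)]

lemma norm_unitVecOfCos {c : ℝ} (hc : |c| ≤ 1) : ‖unitVecOfCos c‖ = 1 := by
  rw [EuclideanSpace.norm_eq, Real.sqrt_eq_one, Fin.sum_univ_two]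
  simp only [unitVecOfCos, PiLp.toLp_apply, Matrix.cons_val_zero, Matrix.cons_val_one,
    Real.norm_eq_abs, sq_abs]
  rw [Real.sq_sqrt (by nlinarith [sq_abs c, abs_nonneg c])]
  ring

lemma inner_single_zero_unitVecOfCos (c : ℝ) : ⟪EuclideanSpace.single 0 1, unitVecOfCos c⟫ = c := by
  simp [EuclideanSpace.inner_single_left, unitVecOfCos]

/-- There are infinitely many pairwise non-similar well-rounded full-rank lattices
in `ℝ²`, each having exactly 4 minimal vectors. -/
theorem statement9 :
    ∃ F : ℕ → Submodule ℤ (EuclideanSpace ℝ (Fin 2)),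
      (∀ n : ℕ, DiscreteTopology (F n) ∧
        Submodule.span ℝ ((F n : Set (EuclideanSpace ℝ (Fin 2)))) = ⊤ ∧
        pIsWellRounded (F n : Set (EuclideanSpace ℝ (Fin 2))) ∧
        (pMinVecs (F n : Set (EuclideanSpace ℝ (Fin 2)))).ncard = 4) ∧
      ∀ m n : ℕ, m ≠ n →
        ¬ pSimilar (F m : Set (EuclideanSpace ℝ (Fin 2)))
            (F n : Set (EuclideanSpace ℝ (Fin 2))) := by
  set c : ℕ → ℝ := fun n => 1 / (n + 3)
  have hc : ∀ n, |c n| < 1 / 2 := fun n => by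
    rw [abs_of_pos (by positivity), div_lt_div_iff₀ (by positivity) two_pos]
    linarith [n.cast_nonneg (α := ℝ)]
  have hc_inj : ∀ m n, |c m| = |c n| → m = n := fun m n h => by
    rw [abs_of_pos (by positivity), abs_of_pos (by positivity)] at h
    simpa only [c, one_div, inv_inj, add_left_inj, Nat.cast_inj] using h
  let u := EuclideanSpace.single (0 : Fin 2) (1 : ℝ)
  have hu : ‖u‖ = 1 := by simp [u]
  have hv n : ‖unitVecOfCos (c n)‖ = 1 := norm_unitVecOfCos (by linarith [hc n])
  have huv n : |⟪u, unitVecOfCos (c n)⟫| < 1 / 2 := by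
    rw [inner_single_zero_unitVecOfCos]; exact hc n
  refine ⟨fun n => pairLattice u (unitVecOfCos (c n)), fun n => ?_, fun m n hmn hsim => hmn ?_⟩
  · exact ⟨discreteTopology_pairLattice hu (hv n) (huv n),
      span_pairLattice hu (hv n) (by linarith [huv n]),
      pIsWellRounded_pairLattice hu (hv n) (huv n),
      ncard_pMinVecs_pairLattice hu (hv n) (huv n)⟩
  · have hcos := abs_inner_eq_of_pSimilar_pairLattice hu (hv m) (huv m) hu (hv n) (huv n) hsim
    rw [inner_single_zero_unitVecOfCos, inner_single_zero_unitVecOfCos] at hcos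
    exact (hc_inj n m hcos).symm
end

section
/- Let t ≥ 5 be an odd integer such that D = t² - 4 is squarefree, and let K = ℚ(√D). Then the ℤ-span I of t+2 and ((t+2) - √D)/2 is an ideal of O_K, and the lattice Λ_K(I) = σ(I) ⊂ ℝ² is well-rounded with minimum |Λ_K(I)| = t(t+2). -/
open NumberField

/-- The squared Euclidean norm of the image of `x : K` under the embedding
`σ : K → ℝ^d`, `σ(x) = (σ₁(x),…,σ_{r₁}(x), Re τ₁(x), Im τ₁(x),…)`; it equals
the sum over all infinite places `w` of `K` of `(w x)^2`. -/
noncomputable def sqNorm (K : Type*) [Field K] [NumberField K] (x : K) : ℝ :=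
  ∑ w : InfinitePlace K, (w x) ^ 2

/-- The minimum `|Λ|` of the lattice `σ(S)`: the infimum of the squared Euclidean
norms of images of nonzero elements of `S ⊆ K`. -/
noncomputable def latMin (K : Type*) [Field K] [NumberField K] (S : Set K) : ℝ :=
  sInf {r : ℝ | ∃ x ∈ S, x ≠ 0 ∧ sqNorm K x = r}

/-- The elements of `S ⊆ K` whose images under `σ` are minimal vectors of the
lattice `σ(S)`. -/
def minVecs (K : Type*) [Field K] [NumberField K] (S : Set K) : Set K :=
  {x ∈ S | sqNorm K x = latMin K S}

/-- The lattice `σ(S) ⊆ ℝ^d` is well-rounded: its minimal vectors span `ℝ^d`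
(identified with the mixed space `ℝ^{r₁} × ℂ^{r₂}`). -/
def IsWellRounded (K : Type*) [Field K] [NumberField K] (S : Set K) : Prop :=
  Submodule.span ℝ (mixedEmbedding K '' minVecs K S) = ⊤

/-!
Put `θ = (1 + α) / 2`, `g = t + 2` and `ω = (g - α) / 2`. Since `D = t² - 4` is squarefree and
`D ≡ 1 (mod 4)`, integrality of the trace and norm of `p + qα` forces `𝓞 K = ℤ[θ]`; as `θ g` and
`θ ω` lie in `J = ℤ g + ℤ ω`, the lattice `J` is an ideal. Both embeddings of `K` are real, so the
squared length of `σ(x)` is `Tr(x²)`, which on `a g + b ω` is the binary quadratic form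
`(t + 2)((t + 2)(2a + b)² + (t - 2)b²) / 2`. Its minimum over `(a, b) ≠ 0` is `t(t + 2)`, attained
at `ω` and at `g - ω = (g + α) / 2`; these span `K` over `ℚ`, so their images span `ℝ²`.
-/

open Polynomial ComplexConjugate

section Embeddings

variable {K : Type*} [Field K] [NumberField K]

theorem sqNorm_eq_trace_sq [IsTotallyReal K] (x : K) :
    sqNorm K x = Algebra.trace ℚ K (x ^ 2) := by
  classical
  have hφ (φ : K →+* ℂ) : φ (x ^ 2) = ((InfinitePlace.mk φ x ^ 2 : ℝ) : ℂ) := by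
    have hreal : conj (φ x) = φ x := RingHom.congr_fun
      (ComplexEmbedding.isReal_iff.mp (IsTotallyReal.complexEmbedding_isReal φ)) x
    rw [InfinitePlace.apply, map_pow, Complex.ofReal_pow, ← Complex.mul_conj', hreal, sq]
  apply Complex.ofReal_injective
  rw [Complex.ofReal_ratCast, ← eq_ratCast (algebraMap ℚ ℂ), trace_eq_sum_embeddings,
    ← Fintype.sum_equiv (RingHom.equivRatAlgHom K ℂ) (fun φ => φ (x ^ 2)) _ (fun _ => rfl),
    ← Finset.sum_fiberwise Finset.univ InfinitePlace.mk, sqNorm, Complex.ofReal_sum]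
  refine Finset.sum_congr rfl fun w _ => ?_
  rw [Finset.sum_congr rfl fun φ hφw => (hφ φ).trans (by rw [(Finset.mem_filter.mp hφw).2]),
    Finset.sum_const, InfinitePlace.card_filter_mk_eq, IsTotallyReal.mult_eq, one_smul]

theorem span_real_mixedEmbedding_eq_top {T : Set K} (hT : Submodule.span ℚ T = ⊤) :
    Submodule.span ℝ (mixedEmbedding K '' T) = ⊤ := by
  rw [eq_top_iff, ← (mixedEmbedding.latticeBasis K).span_eq, Submodule.span_le]
  rintro _ ⟨i, rfl⟩
  rw [mixedEmbedding.latticeBasis_apply]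
  suffices ∀ x ∈ Submodule.span ℚ T,
      mixedEmbedding K x ∈ Submodule.span ℝ (mixedEmbedding K '' T) from this _ (hT ▸ trivial)
  intro x hx
  induction hx using Submodule.span_induction with
  | mem x hx => exact Submodule.subset_span ⟨x, hx, rfl⟩
  | zero => simp
  | add x y _ _ hx hy => simpa using add_mem hx hy
  | smul q x _ hx => simpa [map_rat_smul] using Submodule.smul_of_tower_mem _ q hx

theorem isWellRounded_of_span_rat_eq_top {S T : Set K} (hTS : T ⊆ minVecs K S)
    (hT : Submodule.span ℚ T = ⊤) : IsWellRounded K S :=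
  top_unique <| (span_real_mixedEmbedding_eq_top hT).ge.trans
    (Submodule.span_mono (Set.image_mono hTS))

end Embeddings

theorem exists_ideal_image_eq {K : Type*} [Field K] (J : Submodule ℤ K)
    (hint : ∀ x ∈ J, IsIntegral ℤ x)
    (hmul : ∀ r : 𝓞 K, ∀ x ∈ J, (r : K) * x ∈ J) :
    ∃ I : Ideal (𝓞 K), algebraMap (𝓞 K) K '' I = J := by
  refine ⟨{ carrier := {r | (r : K) ∈ J}
            add_mem' := fun ha hb => by simpa using J.add_mem ha hb
            zero_mem' := by simp
            smul_mem' := fun c x hx => by simpa using hmul c _ hx }, ?_⟩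
  ext x
  refine ⟨?_, fun hx => ⟨⟨x, hint x hx⟩, hx, rfl⟩⟩
  rintro ⟨r, hr, rfl⟩
  exact hr

theorem mul_mem_span_pair {R M : Type*} [CommRing R] [CommRing M] [Algebra R M] {a b c x : M}
    (ha : c * a ∈ Submodule.span R {a, b}) (hb : c * b ∈ Submodule.span R {a, b})
    (hx : x ∈ Submodule.span R {a, b}) : c * x ∈ Submodule.span R {a, b} := by
  obtain ⟨m, n, rfl⟩ := Submodule.mem_span_pair.mp hx
  rw [mul_add, mul_smul_comm, mul_smul_comm]
  exact add_mem (Submodule.smul_mem _ m ha) (Submodule.smul_mem _ n hb)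

theorem Rat.exists_eq_intCast_of_sq_mul_eq_intCast {D n : ℤ} (hD : Squarefree D) {q : ℚ}
    (h : q ^ 2 * D = n) : ∃ m : ℤ, q = m := by
  have hint : IsIntegral ℤ (q * D) :=
    .of_pow two_pos <| by
      rw [mul_pow, sq (D : ℚ), ← mul_assoc, h]
      exact_mod_cast isIntegral_intCast _
  obtain ⟨m, hm⟩ := IsIntegrallyClosed.isIntegral_iff.mp hint
  rw [eq_intCast] at hm
  obtain ⟨k, rfl⟩ : D ∣ m := by
    refine (hD.dvd_pow_iff_dvd two_ne_zero).mp ⟨n, ?_⟩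
    have : ((m ^ 2 : ℤ) : ℚ) = ((D * n : ℤ) : ℚ) := by
      push_cast
      rw [hm, ← h]
      ring
    exact_mod_cast this
  refine ⟨k, mul_left_cancel₀ (Int.cast_ne_zero.mpr hD.ne_zero) ?_⟩
  push_cast at hm
  linear_combination -hm

theorem Int.even_sub_of_sq_sub_sq_mul_eq {u v D N : ℤ} (hD : D % 4 = 1)
    (h : u ^ 2 - v ^ 2 * D = 4 * N) : Even (u - v) := by
  have hfactor : (u - v) * (u - v + 2 * v) = 2 * (2 * (N + v ^ 2 * (D / 4))) := by
    linear_combination h + v ^ 2 * (by omega : D = 4 * (D / 4) + 1)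
  by_contra hodd
  rw [Int.not_even_iff_odd] at hodd
  exact Int.not_even_iff_odd.mpr (hfactor ▸ hodd.mul (hodd.add_even (even_two_mul v)))
    (even_two_mul _)

theorem two_mul_le_mul_sq_add_mul_sq {t a b : ℤ} (ht : 4 ≤ t) (hab : a ≠ 0 ∨ b ≠ 0) :
    2 * t ≤ (t + 2) * (2 * a + b) ^ 2 + (t - 2) * b ^ 2 := by
  rcases eq_or_ne b 0 with rfl | hb
  · have : 0 < a ^ 2 := by have := hab.resolve_right (by simp); positivity
    nlinarith
  have hb2 : 0 < b ^ 2 := by positivity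
  rcases eq_or_ne (2 * a + b) 0 with h | h
  · obtain rfl : b = -(2 * a) := by omega
    have : a ≠ 0 := by omega
    have : 0 < a ^ 2 := by positivity
    nlinarith
  · have : 0 < (2 * a + b) ^ 2 := by positivity
    nlinarith

theorem Int.sq_sub_four_emod_four_of_odd {t : ℤ} (hodd : Odd t) : (t ^ 2 - 4) % 4 = 1 := by
  obtain ⟨j, rfl⟩ := hodd
  rw [show (2 * j + 1) ^ 2 - 4 = 4 * (j ^ 2 + j - 1) + 1 by ring]
  omega

section QuadraticField

variable {K : Type*} [Field K] [NumberField K] {D : ℤ} {α : K}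

theorem notMem_range_algebraMap_of_sq_eq (hα : α ^ 2 = D) (hD : Squarefree D) (hD1 : D ≠ 1) :
    α ∉ (algebraMap ℚ K).range := by
  rintro ⟨q, rfl⟩
  have hq : q ^ 2 = D := by
    apply (algebraMap ℚ K).injective
    simpa using hα
  obtain ⟨m, rfl⟩ := Rat.isSquare_intCast_iff.mp ⟨q, by rw [← hq, sq]⟩
  rcases Int.isUnit_iff.mp (hD m dvd_rfl) with rfl | rfl <;> simp at hD1

theorem span_one_eq_top_of_finrank_eq_two (hK : Module.finrank ℚ K = 2)
    (hα : α ∉ (algebraMap ℚ K).range) : Submodule.span ℚ {1, α} = ⊤ := by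
  have hli : LinearIndependent ℚ ![(1 : K), α] := by
    rw [LinearIndependent.pair_iff' one_ne_zero]
    intro a ha
    exact hα ⟨a, by rw [← ha, Algebra.algebraMap_eq_smul_one]⟩
  rw [← Matrix.range_cons_cons_empty 1 α ![]]
  exact hli.span_eq_top_of_card_eq_finrank (by simp [hK])

theorem exists_eq_ratCast_add_ratCast_mul (hK : Module.finrank ℚ K = 2)
    (hα : α ∉ (algebraMap ℚ K).range) (x : K) : ∃ p q : ℚ, x = p + q * α := by
  have hx : x ∈ Submodule.span ℚ {1, α} := by
    rw [span_one_eq_top_of_finrank_eq_two hK hα]; trivial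
  obtain ⟨p, q, rfl⟩ := Submodule.mem_span_pair.mp hx
  exact ⟨p, q, by simp [Rat.smul_def]⟩

theorem RingHom.ext_of_finrank_eq_two {L : Type*} [DivisionRing L] [CharZero L]
    (hK : Module.finrank ℚ K = 2) (hα : α ∉ (algebraMap ℚ K).range) {φ ψ : K →+* L}
    (h : φ α = ψ α) : φ = ψ := by
  ext x
  obtain ⟨p, q, rfl⟩ := exists_eq_ratCast_add_ratCast_mul hK hα x
  simp [h]

theorem minpoly_eq_X_sq_sub (hα : α ^ 2 = D)
    (hirr : α ∉ (algebraMap ℚ K).range) : minpoly ℚ α = X ^ 2 - C (D : ℚ) := by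
  have hint : IsIntegral ℚ α := .of_finite ℚ α
  refine (eq_of_monic_of_dvd_of_natDegree_le (minpoly.monic hint)
    (monic_X_pow_sub_C _ two_ne_zero) (minpoly.dvd ℚ α ?_) ?_).symm
  · simp [hα]
  · rw [natDegree_X_pow_sub_C]
    exact (minpoly.two_le_natDegree_iff hint).mpr hirr

theorem trace_ratCast_add_ratCast_mul (hK : Module.finrank ℚ K = 2) (hα : α ^ 2 = D)
    (hirr : α ∉ (algebraMap ℚ K).range) (p q : ℚ) :
    Algebra.trace ℚ K (p + q * α) = 2 * p := by
  have htr : Algebra.trace ℚ K α = 0 := by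
    rw [trace_eq_finrank_mul_minpoly_nextCoeff, minpoly_eq_X_sq_sub hα hirr,
      nextCoeff_of_natDegree_pos (by rw [natDegree_X_pow_sub_C]; norm_num),
      natDegree_X_pow_sub_C, coeff_sub, coeff_C]
    simp
  rw [map_add, ← Rat.smul_def, map_smul, htr, ← eq_ratCast (algebraMap ℚ K),
    Algebra.trace_algebraMap, hK]
  simp

theorem isTotallyReal_of_sq_eq (hK : Module.finrank ℚ K = 2) (hα : α ^ 2 = D)
    (hirr : α ∉ (algebraMap ℚ K).range) (hD : 0 < D) : IsTotallyReal K := by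
  refine ⟨fun w => ?_⟩
  rw [InfinitePlace.isReal_iff, ComplexEmbedding.isReal_iff]
  refine RingHom.ext_of_finrank_eq_two hK hirr ?_
  have hsq : w.embedding α ^ 2 = ((√(D : ℝ) : ℝ) : ℂ) ^ 2 := by
    rw [← map_pow, hα, ← Complex.ofReal_pow, Real.sq_sqrt (by exact_mod_cast hD.le)]
    simp
  rw [ComplexEmbedding.conjugate_coe_eq]
  rcases sq_eq_sq_iff_eq_or_eq_neg.mp hsq with h | h <;> simp [h, Complex.conj_ofReal]

theorem sqNorm_ratCast_add_ratCast_mul (hK : Module.finrank ℚ K = 2) (hα : α ^ 2 = D)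
    (hirr : α ∉ (algebraMap ℚ K).range) (hD : 0 < D) (p q : ℚ) :
    sqNorm K (p + q * α) = 2 * (p ^ 2 + q ^ 2 * D) := by
  have := isTotallyReal_of_sq_eq hK hα hirr hD
  have hsq : (p + q * α) ^ 2 = ((p ^ 2 + q ^ 2 * D : ℚ) : K) + ((2 * p * q : ℚ) : K) * α := by
    push_cast
    linear_combination (q : K) ^ 2 * hα
  rw [sqNorm_eq_trace_sq, hsq, trace_ratCast_add_ratCast_mul hK hα hirr]
  push_cast
  ring

theorem isIntegral_one_add_div_two (hα : α ^ 2 = D) (hD : D % 4 = 1) :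
    IsIntegral ℤ ((1 + α) / 2) := by
  refine ⟨X ^ 2 - X - C (D / 4), by monicity!, ?_⟩
  have hD' : (D : K) = 4 * ((D / 4 : ℤ) : K) + 1 := by
    exact_mod_cast (by omega : D = 4 * (D / 4) + 1)
  simp only [eval₂_sub, eval₂_X_pow, eval₂_X, eval₂_C, algebraMap_int_eq,
    Int.coe_castRingHom]
  linear_combination hα / 4 + hD' / 4

theorem exists_intCast_eq_two_mul_and_norm_of_isIntegral (hK : Module.finrank ℚ K = 2)
    (hα : α ^ 2 = D) (hirr : α ∉ (algebraMap ℚ K).range) {p q : ℚ}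
    (hx : IsIntegral ℤ ((p : K) + q * α)) :
    ∃ u N : ℤ, (u : ℚ) = 2 * p ∧ (N : ℚ) = p ^ 2 - q ^ 2 * D := by
  obtain ⟨u, hu⟩ := IsIntegrallyClosed.isIntegral_iff.mp
    (trace_ratCast_add_ratCast_mul hK hα hirr p q ▸ Algebra.isIntegral_trace (L := ℚ) hx)
  rw [eq_intCast] at hu
  have hnorm : algebraMap ℚ K (p ^ 2 - q ^ 2 * D) = (p + q * α) * (u - (p + q * α)) := by
    have huK : (u : K) = 2 * p := by exact_mod_cast congrArg ((↑) : ℚ → K) hu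
    rw [eq_ratCast, huK]
    push_cast
    linear_combination (q : K) ^ 2 * hα
  obtain ⟨N, hN⟩ := IsIntegrallyClosed.isIntegral_iff.mp
    ((isIntegral_algebraMap_iff (algebraMap ℚ K).injective).mp
      (hnorm ▸ hx.mul ((isIntegral_intCast u).sub hx)))
  exact ⟨u, N, hu, by simpa using hN⟩

theorem isIntegral_iff_exists_eq_intCast_add_intCast_mul (hK : Module.finrank ℚ K = 2)
    (hα : α ^ 2 = D) (hirr : α ∉ (algebraMap ℚ K).range) (hD : Squarefree D)
    (hD4 : D % 4 = 1)
    {x : K} : IsIntegral ℤ x ↔ ∃ m n : ℤ, x = m + n * ((1 + α) / 2) := by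
  refine ⟨fun hx => ?_, fun ⟨m, n, hx⟩ => hx ▸ (isIntegral_intCast m).add
    ((isIntegral_intCast n).mul (isIntegral_one_add_div_two hα hD4))⟩
  obtain ⟨p, q, rfl⟩ := exists_eq_ratCast_add_ratCast_mul hK hirr x
  obtain ⟨u, N, hu, hN⟩ := exists_intCast_eq_two_mul_and_norm_of_isIntegral hK hα hirr hx
  obtain ⟨v, hv⟩ := Rat.exists_eq_intCast_of_sq_mul_eq_intCast hD (q := 2 * q)
    (n := u ^ 2 - 4 * N) (by push_cast; rw [hu, hN]; ring)
  have huv : u ^ 2 - v ^ 2 * D = 4 * N := by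
    have : ((u ^ 2 - v ^ 2 * D : ℤ) : ℚ) = ((4 * N : ℤ) : ℚ) := by
      push_cast
      rw [hu, ← hv, hN]
      ring
    exact_mod_cast this
  obtain ⟨k, hk⟩ := Int.even_sub_of_sq_sub_sq_mul_eq hD4 huv
  refine ⟨k, v, ?_⟩
  have hpK : (p : K) = u / 2 := by rw [← Rat.cast_intCast, hu]; push_cast; ring
  have hqK : (q : K) = v / 2 := by rw [← Rat.cast_intCast, ← hv]; push_cast; ring
  have hkK : (u : K) = v + 2 * k := by exact_mod_cast (by linarith : u = v + 2 * k)
  rw [hpK, hqK, hkK]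
  ring

end QuadraticField

section Lattice

variable {K : Type*} [Field K] [NumberField K] {t : ℤ} {α : K}

theorem one_add_div_two_mul_mem_span (hodd : Odd t) (hα : α ^ 2 = ((t ^ 2 - 4 : ℤ) : K)) {x : K}
    (hx : x ∈ Submodule.span ℤ {(t : K) + 2, ((t : K) + 2 - α) / 2}) :
    (1 + α) / 2 * x ∈ Submodule.span ℤ {(t : K) + 2, ((t : K) + 2 - α) / 2} := by
  obtain ⟨j, rfl⟩ := hodd
  refine mul_mem_span_pair (Submodule.mem_span_pair.mpr ⟨j + 2, -(2 * j + 3), ?_⟩)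
    (Submodule.mem_span_pair.mpr ⟨1, -(j + 1), ?_⟩) hx
  · simp only [zsmul_eq_mul]
    push_cast
    ring
  · simp only [zsmul_eq_mul]
    push_cast at hα ⊢
    linear_combination hα / 4

theorem isIntegral_of_mem_span (hodd : Odd t) (hα : α ^ 2 = ((t ^ 2 - 4 : ℤ) : K))
    {x : K} (hx : x ∈ Submodule.span ℤ {(t : K) + 2, ((t : K) + 2 - α) / 2}) :
    IsIntegral ℤ x := by
  have hD4 := Int.sq_sub_four_emod_four_of_odd hodd
  obtain ⟨a, b, rfl⟩ := Submodule.mem_span_pair.mp hx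
  obtain ⟨j, rfl⟩ := hodd
  have hg : ((2 * j + 1 : ℤ) : K) + 2 = ((2 * j + 3 : ℤ) : K) := by push_cast; ring
  have hω : (((2 * j + 1 : ℤ) : K) + 2 - α) / 2 = ((j + 2 : ℤ) : K) - (1 + α) / 2 := by
    push_cast
    ring
  rw [hω, hg, zsmul_eq_mul, zsmul_eq_mul]
  exact ((isIntegral_intCast a).mul (isIntegral_intCast _)).add
    ((isIntegral_intCast b).mul ((isIntegral_intCast _).sub
      (isIntegral_one_add_div_two hα hD4)))

theorem exists_ideal_image_eq_span (hK : Module.finrank ℚ K = 2) (hodd : Odd t)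
    (hsq : Squarefree (t ^ 2 - 4)) (hα : α ^ 2 = ((t ^ 2 - 4 : ℤ) : K))
    (hirr : α ∉ (algebraMap ℚ K).range) :
    ∃ I : Ideal (𝓞 K), algebraMap (𝓞 K) K '' I =
      (Submodule.span ℤ {(t : K) + 2, ((t : K) + 2 - α) / 2} : Set K) := by
  have hD4 := Int.sq_sub_four_emod_four_of_odd hodd
  refine exists_ideal_image_eq _ (fun x hx => isIntegral_of_mem_span hodd hα hx) fun r x hx => ?_
  obtain ⟨m, n, hr⟩ := (isIntegral_iff_exists_eq_intCast_add_intCast_mul hK hα hirr hsq hD4).mp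
    r.isIntegral_coe
  rw [← RingOfIntegers.coe_eq_algebraMap] at hr
  rw [hr, add_mul, mul_assoc, ← zsmul_eq_mul, ← zsmul_eq_mul]
  exact add_mem (Submodule.smul_mem _ m hx)
    (Submodule.smul_mem _ n (one_add_div_two_mul_mem_span hodd hα hx))

theorem sqNorm_zsmul_add_zsmul (hK : Module.finrank ℚ K = 2)
    (hα : α ^ 2 = ((t ^ 2 - 4 : ℤ) : K)) (hirr : α ∉ (algebraMap ℚ K).range) (ht : 2 < t)
    (a b : ℤ) : sqNorm K (a • ((t : K) + 2) + b • (((t : K) + 2 - α) / 2)) =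
      (t + 2) * ((t + 2) * (2 * a + b) ^ 2 + (t - 2) * b ^ 2) / 2 := by
  have hx : a • ((t : K) + 2) + b • (((t : K) + 2 - α) / 2) =
      (((t + 2) * (2 * a + b) / 2 : ℚ) : K) + ((-b / 2 : ℚ) : K) * α := by
    simp only [zsmul_eq_mul]
    push_cast
    ring
  rw [hx, sqNorm_ratCast_add_ratCast_mul hK hα hirr (by nlinarith)]
  push_cast
  ring

theorem isLeast_sqNorm_span (hK : Module.finrank ℚ K = 2)
    (hα : α ^ 2 = ((t ^ 2 - 4 : ℤ) : K)) (hirr : α ∉ (algebraMap ℚ K).range)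
    (ht : 4 ≤ t) :
    IsLeast {r | ∃ x ∈ (Submodule.span ℤ {(t : K) + 2, ((t : K) + 2 - α) / 2} : Set K),
      x ≠ 0 ∧ sqNorm K x = r} (t * (t + 2)) := by
  have ht' : (4 : ℝ) ≤ t := by exact_mod_cast ht
  refine ⟨⟨_, Submodule.subset_span (Set.mem_insert_of_mem _ rfl), ?_, ?_⟩, ?_⟩
  · intro h
    exact hirr ⟨t + 2, by simp only [map_add, map_intCast, map_ofNat]; linear_combination 2 * h⟩
  · simpa using (sqNorm_zsmul_add_zsmul hK hα hirr (by omega) 0 1).trans (by ring)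
  · rintro _ ⟨x, hx, hx0, rfl⟩
    obtain ⟨a, b, rfl⟩ := Submodule.mem_span_pair.mp hx
    have hab : a ≠ 0 ∨ b ≠ 0 := by
      contrapose! hx0
      simp [hx0]
    have := two_mul_le_mul_sq_add_mul_sq ht hab
    rw [sqNorm_zsmul_add_zsmul hK hα hirr (by omega)]
    have hR : (2 * t : ℝ) ≤ (t + 2) * (2 * a + b) ^ 2 + (t - 2) * b ^ 2 := by
      exact_mod_cast this
    nlinarith

theorem isWellRounded_span (hK : Module.finrank ℚ K = 2) (hα : α ^ 2 = ((t ^ 2 - 4 : ℤ) : K))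
    (hirr : α ∉ (algebraMap ℚ K).range) (ht : 4 ≤ t) :
    IsWellRounded K (Submodule.span ℤ {(t : K) + 2, ((t : K) + 2 - α) / 2} : Set K) := by
  set g : K := t + 2
  set ω : K := ((t : K) + 2 - α) / 2
  have hleast := isLeast_sqNorm_span hK hα hirr ht
  have hmem (a b : ℤ) (h : ((t + 2) * ((t + 2) * (2 * a + b) ^ 2 + (t - 2) * b ^ 2) / 2 : ℝ) =
      t * (t + 2)) : a • g + b • ω ∈ minVecs K (Submodule.span ℤ {g, ω}) :=
    ⟨Submodule.mem_span_pair.mpr ⟨a, b, rfl⟩,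
      by rw [latMin, hleast.csInf_eq, sqNorm_zsmul_add_zsmul hK hα hirr (by omega), h]⟩
  have hω : ω ∈ minVecs K (Submodule.span ℤ {g, ω}) := by
    simpa using hmem 0 1 (by push_cast; ring)
  have hgω : g - ω ∈ minVecs K (Submodule.span ℤ {g, ω}) := by
    simpa [sub_eq_add_neg] using hmem 1 (-1) (by push_cast; ring)
  refine isWellRounded_of_span_rat_eq_top
    (Set.insert_subset hω (Set.singleton_subset_iff.mpr hgω)) ?_
  have hω' : ω ∈ Submodule.span ℚ {ω, g - ω} := Submodule.subset_span (Set.mem_insert _ _)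
  have hgω' : g - ω ∈ Submodule.span ℚ {ω, g - ω} :=
    Submodule.subset_span (Set.mem_insert_of_mem _ rfl)
  rw [eq_top_iff, ← span_one_eq_top_of_finrank_eq_two hK hirr, Submodule.span_le,
    Set.insert_subset_iff, Set.singleton_subset_iff, SetLike.mem_coe, SetLike.mem_coe]
  constructor
  · convert Submodule.smul_mem _ ((t + 2 : ℚ)⁻¹) (add_mem hω' hgω') using 1
    have : (t : K) + 2 ≠ 0 := by exact_mod_cast (by omega : t + 2 ≠ 0)
    simp [Rat.smul_def, g]
    field_simp
  · convert sub_mem hgω' hω' using 1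
    simp only [g, ω]
    ring

end Lattice

/-- Let `t ≥ 5` be an odd integer such that `D = t² - 4` is squarefree, and
`K = ℚ(√D)`. Then the `ℤ`-span `I` of `t+2` and `((t+2) - √D)/2` is an ideal of
`O_K`, and the lattice `Λ_K(I) ⊂ ℝ²` is well-rounded with minimum `t(t+2)`. -/
theorem statement16 (t : ℤ) (ht : 5 ≤ t) (hodd : Odd t)
    (hsq : Squarefree (t ^ 2 - 4))
    (K : Type*) [Field K] [NumberField K] (hdeg : Module.finrank ℚ K = 2)
    (α : K) (hα : α ^ 2 = ((t ^ 2 - 4 : ℤ) : K)) :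
    (∃ I : Ideal (𝓞 K), algebraMap (𝓞 K) K '' (I : Set (𝓞 K)) =
        (Submodule.span ℤ {((t : K) + 2), (((t : K) + 2) - α) / 2} : Set K)) ∧
    IsWellRounded K
      (Submodule.span ℤ {((t : K) + 2), (((t : K) + 2) - α) / 2} : Set K) ∧
    latMin K (Submodule.span ℤ {((t : K) + 2), (((t : K) + 2) - α) / 2} : Set K) =
      (t : ℝ) * ((t : ℝ) + 2) := by
  have hirr : α ∉ (algebraMap ℚ K).range :=
    notMem_range_algebraMap_of_sq_eq hα hsq (by nlinarith)
  exact ⟨exists_ideal_image_eq_span hdeg hodd hsq hα hirr,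
    isWellRounded_span hdeg hα hirr (by omega),
    (isLeast_sqNorm_span hdeg hα hirr (by omega)).csInf_eq⟩
end
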